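/- (Adem–Reichstein) Let F be a field, n a positive integer, d a nonnegative integer, and let I = (m_{(d+1)}, m_{(d+2)}, ..., m_{(d+n)}) be the ideal of F[x_1,...,x_n]^{S_n} generated by the power sums of degrees d+1 through d+n. Then I contains every monomial symmetric polynomial m_λ with λ a partition of length at most n such that lp(λ) ≥ d+1 and the leading multiplicity lm(λ), viewed as an element of F, is invertible (i.e., nonzero in F). -/

import Mathlib

open MvPolynomial

/-- The monomial symmetric polynomial in `n` variables attached to the multiset `lam`
(the parts of the partition; zero entries are discarded). -/
noncomputable def mSym (F : Type*) [Field F] (n : ℕ) (lam : Multiset ℕ) :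
    MvPolynomial (Fin n) F :=
  msymm (Fin n) F
    (⟨Multiset.filter (0 < ·) lam, fun {_} hx => (Multiset.mem_filter.mp hx).2, rfl⟩ :
      Nat.Partition (Multiset.filter (0 < ·) lam).sum)

/-- The monomial symmetric polynomial, as an element of the subalgebra of
symmetric polynomials. -/
noncomputable def mSymS (F : Type*) [Field F] (n : ℕ) (lam : Multiset ℕ) :
    symmetricSubalgebra (Fin n) F :=
  ⟨mSym F n lam, msymm_isSymmetric _ _ _⟩

/-- `lam` is (the multiset of parts of) a partition of length at most `n`. -/
def IsPartition (n : ℕ) (lam : Multiset ℕ) : Prop :=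
  (∀ x ∈ lam, 0 < x) ∧ Multiset.card lam ≤ n

/-- The leading part `lp` of a partition. -/
def leadingPart (lam : Multiset ℕ) : ℕ := lam.sup

/-- The leading multiplicity `lm` of a partition. -/
def leadingMult (lam : Multiset ℕ) : ℕ := lam.count lam.sup

/-- The ideal `I_{n,d}` of truncated symmetric polynomials: the intersection of
`(x_1^{d+1}, …, x_n^{d+1})` with the subring of symmetric polynomials. -/
noncomputable def truncIdeal (F : Type*) [Field F] (n d : ℕ) :
    Ideal (symmetricSubalgebra (Fin n) F) :=
  Ideal.comap (symmetricSubalgebra (Fin n) F).val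
    (Ideal.span (Set.range fun i : Fin n => (X i : MvPolynomial (Fin n) F) ^ (d + 1)))

/-!
Write `λ = s ∪ μ` with `s = lp(λ)`. Multiplying `m_μ` by the power sum `p_s` adds `s` to one
exponent of each monomial of `m_μ`; since `s` dominates every part of `μ`, this gives
`p_s m_μ = lm(λ) m_λ + ∑_r m_{(r + s) ∪ μ ∖ r}`, the sum running over the distinct parts `r` of `μ`.
Each partition in the sum is shorter than `λ`, has leading part `r + s > s` and leading
multiplicity `1`, so it lies in `I` by induction on the length. Newton's identities express `p_k`
for `k > n` through `p_{k-1}, …, p_{k-n}`, hence `p_s ∈ I`. As `lm(λ)` is invertible, `m_λ ∈ I`.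
-/

open Finset in
theorem Finset.sum_sum_filter_eq_sum_card_nsmul {ι κ M : Type*} [Fintype ι] [AddCommMonoid M]
    (B : Finset κ) (P : ι → κ → Prop) [∀ i b, Decidable (P i b)] (f : κ → M) :
    ∑ i, ∑ b ∈ B with P i b, f b = ∑ b ∈ B, #{i | P i b} • f b := by
  simp only [sum_filter]
  rw [sum_comm]
  refine sum_congr rfl fun b _ => ?_
  rw [← sum_filter, sum_const]

theorem Ideal.mem_span_of_linear_recurrence {A : Type*} [CommSemiring A] (p c : ℕ → A) {d n : ℕ}
    (hrec : ∀ k, d + n < k → p k = ∑ j ∈ Finset.Icc 1 n, c j * p (k - j)) {k : ℕ}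
    (hk : d + 1 ≤ k) : p k ∈ Ideal.span ((fun j => p (d + j)) '' Set.Icc 1 n) := by
  induction k using Nat.strong_induction_on with
  | _ k ih =>
    rcases le_or_gt k (d + n) with h | h
    · refine Ideal.subset_span ⟨k - d, ⟨by omega, by omega⟩, ?_⟩
      exact congrArg p (Nat.add_sub_cancel' (by omega))
    · rw [hrec k h]
      refine Ideal.sum_mem _ fun j hj => Ideal.mul_mem_left _ _ (ih _ ?_ ?_) <;>
        simp only [Finset.mem_Icc] at hj <;> omega

namespace Finsupp

open Finset

variable {σ : Type*} {α : σ →₀ ℕ}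

def shape (α : σ →₀ ℕ) : Multiset ℕ := α.support.val.map α

theorem zero_notMem_shape : 0 ∉ α.shape := by
  simp [shape]

theorem sum_shape : α.shape.sum = α.degree := rfl

theorem apply_mem_shape {i : σ} (h : α i ≠ 0) : α i ∈ α.shape :=
  Multiset.mem_map_of_mem _ (mem_support_iff.mpr h)

theorem shape_single {a : ℕ} (ha : a ≠ 0) (i : σ) : (single i a).shape = {a} := by
  simp [shape, support_single i ha]

theorem shape_eq_singleton_iff {a : ℕ} (ha : a ≠ 0) : α.shape = {a} ↔ ∃ i, single i a = α := by
  refine ⟨fun h => ?_, fun ⟨i, hi⟩ => hi ▸ shape_single ha i⟩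
  obtain ⟨i, hi, hα⟩ := card_support_eq_one.mp (by simpa [shape] using congrArg Multiset.card h)
  rw [hα, shape_single hi, Multiset.singleton_inj] at h
  exact ⟨i, by rw [← h, ← hα]⟩

section DecidableEq

variable [DecidableEq σ]

theorem shape_eq_cons {i : σ} (h : α i ≠ 0) : α.shape = α i ::ₘ (α.erase i).shape := by
  have hi : i ∈ α.support := mem_support_iff.mpr h
  rw [shape, shape, support_erase, Finset.erase_val]
  conv_lhs => rw [← Multiset.cons_erase hi, Multiset.map_cons]
  congr 1
  exact Multiset.map_congr rfl fun j hj =>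
    (erase_ne ((Multiset.Nodup.mem_erase_iff α.support.nodup).mp hj).1).symm

theorem shape_erase (i : σ) : (α.erase i).shape = α.shape.erase (α i) := by
  by_cases h : α i = 0
  · rw [h, erase_of_notMem_support (notMem_support_iff.mpr h),
      Multiset.erase_of_notMem zero_notMem_shape]
  · rw [shape_eq_cons h, Multiset.erase_cons_head]

theorem shape_add_single {s : ℕ} (hs : s ≠ 0) (i : σ) :
    (α + single i s).shape = (α i + s) ::ₘ α.shape.erase (α i) := by
  rw [shape_eq_cons (i := i) (by simp [hs]), ← shape_erase]
  simp

theorem shape_toFinsupp (m : Multiset σ) : (Multiset.toFinsupp m).shape = m.dedup.map m.count := by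
  simp only [shape, Multiset.toFinsupp_support, Multiset.toFinset_val]
  rfl

end DecidableEq

variable [Fintype σ]

theorem card_filter_eq_count_shape {t : ℕ} (ht : t ≠ 0) : #{i | α i = t} = α.shape.count t := by
  have : ({i | α i = t} : Finset σ) = {i ∈ α.support | t = α i} := by
    ext i
    simp only [mem_filter, mem_univ, true_and, mem_support_iff]
    exact ⟨fun h => ⟨h ▸ ht, h.symm⟩, fun h => h.2.symm⟩
  rw [this, shape, Multiset.count_map]
  rfl

variable (σ) [DecidableEq σ]

noncomputable def shapeFinset (μ : Multiset ℕ) : Finset (σ →₀ ℕ) :=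
  (univ.finsuppAntidiag μ.sum).filter (·.shape = μ)

variable {σ}

@[simp]
theorem mem_shapeFinset {μ : Multiset ℕ} : α ∈ shapeFinset σ μ ↔ α.shape = μ := by
  simp only [shapeFinset, mem_filter, mem_finsuppAntidiag, and_iff_right_iff_imp]
  rintro rfl
  simp [sum_shape, degree_eq_sum]

end Finsupp

namespace MvPolynomial

open Finset Finsupp

variable {σ R : Type*}

theorem esymm_eq_zero_of_card_lt [CommSemiring R] [Fintype σ] {k : ℕ} (hk : Fintype.card σ < k) :
    esymm σ R k = 0 := by
  rw [esymm, powersetCard_eq_empty.mpr (by simpa using hk), sum_empty]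

theorem psum_eq_sum_esymm_mul_psum [CommRing R] [Fintype σ] [DecidableEq σ] {k : ℕ}
    (hk : Fintype.card σ < k) :
    psum σ R k = ∑ j ∈ Icc 1 (Fintype.card σ), (-1) ^ (j + 1) * esymm σ R j * psum σ R (k - j) := by
  rw [psum_eq_mul_esymm_sub_sum σ R k (by omega), esymm_eq_zero_of_card_lt hk, mul_zero, zero_sub,
    ← sum_neg_distrib, sum_filter, Nat.sum_antidiagonal_eq_sum_range_succ_mk]
  have hsub : Icc 1 (Fintype.card σ) ⊆ range (k + 1) := fun j hj => by
    simp only [mem_Icc, mem_range] at hj ⊢; omega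
  rw [← sum_subset hsub]
  · refine sum_congr rfl fun j hj => ?_
    simp only [mem_Icc] at hj
    rw [if_pos ⟨by omega, by omega⟩]
    ring
  · intro j _ hj
    simp only [mem_Icc, not_and, not_le] at hj
    split_ifs with h
    · rw [esymm_eq_zero_of_card_lt (hj (Set.mem_Ioo.mp h).1), mul_zero, zero_mul, neg_zero]
    · rfl

variable [CommSemiring R] [DecidableEq σ]

theorem prod_map_X_eq_monomial_toFinsupp (m : Multiset σ) :
    (m.map X).prod = monomial (Multiset.toFinsupp m) (1 : R) := by
  induction m using Multiset.induction with
  | empty => simp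
  | cons a m ih =>
    rw [Multiset.map_cons, Multiset.prod_cons, ih, ← Multiset.singleton_add,
      Multiset.toFinsupp_add, Multiset.toFinsupp_singleton, X, monomial_mul, one_mul]

variable [Fintype σ]

variable (σ R) in
/-- `msymm` indexed by a bare multiset, so that parts can be moved around without carrying
`Nat.Partition` proofs; it vanishes when `0 ∈ μ`. -/
noncomputable def monomialSymm (μ : Multiset ℕ) : MvPolynomial σ R :=
  ∑ α ∈ shapeFinset σ μ, monomial α 1

theorem msymm_eq_monomialSymm {n : ℕ} (μ : n.Partition) :
    msymm σ R μ = monomialSymm σ R μ.parts := by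
  have card_eq {α : σ →₀ ℕ} (hα : α.shape = μ.parts) : Multiset.card α.toMultiset = n := by
    rw [card_toMultiset, ← μ.parts_sum, ← hα, sum_shape]
    rfl
  have ofSym_eq {α : σ →₀ ℕ} (hα : α.shape = μ.parts) :
      Nat.Partition.ofSym ⟨α.toMultiset, card_eq hα⟩ = μ := by
    ext1
    change α.toMultiset.dedup.map α.toMultiset.count = μ.parts
    rw [← hα, ← shape_toFinsupp, toMultiset_toFinsupp]
  refine sum_bij' (fun s _ => Multiset.toFinsupp s.1.1)
    (fun α hα => ⟨_, ofSym_eq (mem_shapeFinset.mp hα)⟩) ?_ ?_ ?_ ?_ ?_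
  · rintro ⟨s, hs⟩ -
    rw [mem_shapeFinset, shape_toFinsupp]
    exact congrArg Nat.Partition.parts hs
  · exact fun _ _ => mem_univ _
  · rintro s -
    ext : 2
    simp
  · intro α _
    simp
  · exact fun s _ => prod_map_X_eq_monomial_toFinsupp _

theorem monomialSymm_singleton {a : ℕ} (ha : a ≠ 0) : monomialSymm σ R {a} = psum σ R a := by
  have : shapeFinset σ {a} = univ.map ⟨(single · a), single_left_injective ha⟩ := by
    ext α
    simp [shape_eq_singleton_iff ha]
  simp [monomialSymm, this, psum, X_pow_eq_monomial]

theorem sum_shapeFinset_filter_add_single {μ : Multiset ℕ} (h0 : 0 ∉ μ) {r s : ℕ} (hs : s ≠ 0)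
    (hr : r = 0 ∨ r ∈ μ) (i : σ) :
    ∑ α ∈ shapeFinset σ μ with α i = r, monomial (α + single i s) (1 : R) =
      ∑ β ∈ shapeFinset σ ((r + s) ::ₘ μ.erase r) with β i = r + s, monomial β 1 := by
  refine sum_nbij' (· + single i s) (· - single i s) ?_ ?_ ?_ ?_ (fun _ _ => rfl)
  · intro α hα
    simp only [mem_filter, mem_shapeFinset] at hα ⊢
    rw [shape_add_single hs, hα.1, hα.2]
    simpa using hα.2
  · intro β hβ
    simp only [mem_filter, mem_shapeFinset] at hβ ⊢
    obtain ⟨hβ, hβi⟩ := hβ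
    have hαi : (β - single i s) i = r := by simp [hβi]
    refine ⟨?_, hαi⟩
    have hsplit : β - single i s + single i s = β :=
      tsub_add_cancel_of_le (single_le_iff.mpr (by omega))
    have key : (β - single i s).shape.erase r = μ.erase r := by
      rw [← hsplit, shape_add_single hs, hαi] at hβ
      exact (Multiset.cons_inj_right _).mp hβ
    rcases hr with rfl | hr
    · rwa [Multiset.erase_of_notMem zero_notMem_shape, Multiset.erase_of_notMem h0] at key
    · have hr0 : r ≠ 0 := by rintro rfl; exact h0 hr
      rw [← Multiset.cons_erase hr, ← key,
        Multiset.cons_erase (hαi ▸ apply_mem_shape (hαi ▸ hr0))]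
  · intro α _
    simp
  · intro β hβ
    simp only [mem_filter] at hβ
    exact tsub_add_cancel_of_le (single_le_iff.mpr (by omega))

theorem psum_mul_monomialSymm {μ : Multiset ℕ} (h0 : 0 ∉ μ) {s : ℕ} (hs : s ≠ 0) :
    psum σ R s * monomialSymm σ R μ =
      ∑ r ∈ insert 0 μ.toFinset, ((r + s) ::ₘ μ.erase r).count (r + s) •
        monomialSymm σ R ((r + s) ::ₘ μ.erase r) := by
  have maps_to (α) (hα : α ∈ shapeFinset σ μ) (i : σ) : α i ∈ insert 0 μ.toFinset := by
    rw [mem_insert, Multiset.mem_toFinset, ← mem_shapeFinset.mp hα]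
    exact (eq_or_ne (α i) 0).imp id apply_mem_shape
  calc psum σ R s * monomialSymm σ R μ
      = ∑ i, ∑ α ∈ shapeFinset σ μ, monomial (α + single i s) (1 : R) := by
        simp only [psum, monomialSymm, sum_mul_sum, X_pow_eq_monomial, monomial_mul, one_mul,
          add_comm]
    _ = ∑ i, ∑ r ∈ insert 0 μ.toFinset,
          ∑ β ∈ shapeFinset σ ((r + s) ::ₘ μ.erase r) with β i = r + s, monomial β (1 : R) := by
        refine sum_congr rfl fun i _ => ?_
        rw [← sum_fiberwise_of_maps_to (maps_to · · i)]
        refine sum_congr rfl fun r hr => sum_shapeFinset_filter_add_single h0 hs ?_ i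
        simpa [or_iff_not_imp_left] using hr
    _ = _ := by
        rw [Finset.sum_comm]
        refine sum_congr rfl fun r _ => ?_
        rw [sum_sum_filter_eq_sum_card_nsmul, monomialSymm, Finset.smul_sum]
        refine sum_congr rfl fun β hβ => ?_
        rw [card_filter_eq_count_shape (by omega), mem_shapeFinset.mp hβ]

theorem psum_mul_monomialSymm_of_le {μ : Multiset ℕ} (h0 : 0 ∉ μ) {s : ℕ} (hs : s ≠ 0)
    (hle : ∀ x ∈ μ, x ≤ s) :
    psum σ R s * monomialSymm σ R μ =
      (s ::ₘ μ).count s • monomialSymm σ R (s ::ₘ μ) +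
        ∑ r ∈ μ.toFinset, monomialSymm σ R ((r + s) ::ₘ μ.erase r) := by
  rw [psum_mul_monomialSymm h0 hs, sum_insert (by simpa using h0), zero_add,
    Multiset.erase_of_notMem h0]
  congr 1
  refine sum_congr rfl fun r hr => ?_
  have hr0 : r ≠ 0 := by rintro rfl; exact h0 (Multiset.mem_toFinset.mp hr)
  rw [Multiset.count_cons_self, Multiset.count_eq_zero_of_notMem, zero_add, one_smul]
  intro h
  have := hle _ (Multiset.mem_of_mem_erase h)
  omega

end MvPolynomial

section MonomialSymmetric

open Finset

variable {F : Type*} [Field F] {n : ℕ}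

theorem coe_mSymS {lam : Multiset ℕ} (h : ∀ x ∈ lam, 0 < x) :
    (mSymS F n lam : MvPolynomial (Fin n) F) = monomialSymm (Fin n) F lam := by
  change msymm _ _ _ = _
  rw [msymm_eq_monomialSymm]
  exact congrArg _ (Multiset.filter_eq_self.mpr h)

theorem coe_mSymS_singleton {k : ℕ} (hk : k ≠ 0) :
    (mSymS F n {k} : MvPolynomial (Fin n) F) = psum (Fin n) F k :=
  (coe_mSymS (by simpa [Nat.pos_iff_ne_zero])).trans (monomialSymm_singleton hk)

theorem mSymS_singleton_eq_sum {k : ℕ} (hk : n < k) :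
    mSymS F n {k} = ∑ j ∈ Icc 1 n,
      (-1) ^ (j + 1) * ⟨esymm (Fin n) F j, esymm_isSymmetric _ _ _⟩ * mSymS F n {k - j} := by
  apply Subtype.ext
  push_cast
  rw [coe_mSymS_singleton (by omega), psum_eq_sum_esymm_mul_psum (by simpa using hk),
    Fintype.card_fin]
  refine sum_congr rfl fun j hj => ?_
  rw [coe_mSymS_singleton (by simp only [mem_Icc] at hj; omega)]

theorem mSymS_singleton_mem_span {d k : ℕ} (hk : d + 1 ≤ k) :
    mSymS F n {k} ∈ Ideal.span ((fun j => mSymS F n {d + j}) '' Set.Icc 1 n) := by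
  refine Ideal.mem_span_of_linear_recurrence (fun k => mSymS F n {k})
    (fun j => (-1) ^ (j + 1) * ⟨esymm (Fin n) F j, esymm_isSymmetric _ _ _⟩) (fun k hk => ?_) hk
  exact mSymS_singleton_eq_sum (by omega)

theorem mSymS_singleton_mul_mSymS {s : ℕ} (hs : s ≠ 0) {μ : Multiset ℕ} (hμ : ∀ x ∈ μ, 0 < x)
    (hle : ∀ x ∈ μ, x ≤ s) :
    mSymS F n {s} * mSymS F n μ = (s ::ₘ μ).count s • mSymS F n (s ::ₘ μ) +
      ∑ r ∈ μ.toFinset, mSymS F n ((r + s) ::ₘ μ.erase r) := by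
  have hpos : ∀ x ∈ s ::ₘ μ, 0 < x := by simpa [Nat.pos_iff_ne_zero, hs] using hμ
  apply Subtype.ext
  push_cast
  rw [coe_mSymS_singleton hs, coe_mSymS hμ, coe_mSymS hpos,
    psum_mul_monomialSymm_of_le (fun h => (hμ 0 h).false) hs hle]
  congr 1
  exact sum_congr rfl fun r _ => (coe_mSymS (Multiset.forall_mem_cons.mpr
    ⟨by omega, fun x hx => hμ x (Multiset.mem_of_mem_erase hx)⟩)).symm

theorem mSymS_cons_mem {I : Ideal (symmetricSubalgebra (Fin n) F)} {s : ℕ} {μ : Multiset ℕ}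
    (hs : s ≠ 0) (hμ : ∀ x ∈ μ, 0 < x) (hle : ∀ x ∈ μ, x ≤ s)
    (hcount : ((s ::ₘ μ).count s : F) ≠ 0) (hpsum : mSymS F n {s} ∈ I)
    (hrest : ∀ r ∈ μ, mSymS F n ((r + s) ::ₘ μ.erase r) ∈ I) : mSymS F n (s ::ₘ μ) ∈ I := by
  have h := eq_sub_of_add_eq (mSymS_singleton_mul_mSymS (F := F) (n := n) hs hμ hle).symm
  rw [← Nat.cast_smul_eq_nsmul F] at h
  rw [← inv_smul_smul₀ hcount (mSymS F n (s ::ₘ μ)), h]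
  refine Submodule.smul_of_tower_mem _ _ (I.sub_mem (I.mul_mem_right _ hpsum) (I.sum_mem ?_))
  exact fun r hr => hrest r (Multiset.mem_toFinset.mp hr)

end MonomialSymmetric

theorem leadingPart_cons_of_forall_lt {a : ℕ} {μ : Multiset ℕ} (h : ∀ x ∈ μ, x < a) :
    leadingPart (a ::ₘ μ) = a := by
  rw [leadingPart, Multiset.sup_cons, sup_eq_left, Multiset.sup_le]
  exact fun x hx => (h x hx).le

theorem leadingMult_cons_of_forall_lt {a : ℕ} {μ : Multiset ℕ} (h : ∀ x ∈ μ, x < a) :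
    leadingMult (a ::ₘ μ) = 1 := by
  rw [leadingMult, ← leadingPart, leadingPart_cons_of_forall_lt h, Multiset.count_cons_self,
    Multiset.count_eq_zero_of_notMem fun ha => (h a ha).false]

theorem mSymS_mem_span_powerSums_general (F : Type*) [Field F] (n : ℕ) (d : ℕ)
    (lam : Multiset ℕ) (hlam : IsPartition n lam)
    (hlp : d + 1 ≤ leadingPart lam) (hlm : (leadingMult lam : F) ≠ 0) :
    mSymS F n lam ∈
      Ideal.span ((fun j => mSymS F n {d + j}) '' Set.Icc 1 n) := by
  induction h : Multiset.card lam using Nat.strong_induction_on generalizing lam with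
  | _ k ih =>
  set s := leadingPart lam
  set μ := lam.erase s
  have hs : s ∈ lam := Multiset.count_ne_zero.mp fun h0 =>
    hlm (by rw [show leadingMult lam = lam.count s from rfl, h0, Nat.cast_zero])
  have hlam_eq : lam = s ::ₘ μ := (Multiset.cons_erase hs).symm
  have hμ (x) (hx : x ∈ μ) : 0 < x ∧ x ≤ s :=
    ⟨hlam.1 x (Multiset.mem_of_mem_erase hx), Multiset.le_sup (Multiset.mem_of_mem_erase hx)⟩
  rw [hlam_eq]
  refine mSymS_cons_mem (by omega) (fun x hx => (hμ x hx).1) (fun x hx => (hμ x hx).2)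
    (by rwa [← hlam_eq]) (mSymS_singleton_mem_span hlp) fun r hr => ?_
  have hlt (x) (hx : x ∈ μ.erase r) : x < r + s := by
    have := hμ x (Multiset.mem_of_mem_erase hx); have := hμ r hr; omega
  have hcard : Multiset.card ((r + s) ::ₘ μ.erase r) + 1 = k := by
    rw [← h, hlam_eq, Multiset.card_cons, Multiset.card_cons, Multiset.card_erase_add_one hr]
  refine ih _ (by omega) _ ⟨?_, by have := hlam.2; omega⟩ ?_ ?_ rfl
  · exact Multiset.forall_mem_cons.mpr
      ⟨by omega, fun x hx => (hμ x (Multiset.mem_of_mem_erase hx)).1⟩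
  · rw [leadingPart_cons_of_forall_lt hlt]; omega
  · simp [leadingMult_cons_of_forall_lt hlt]

/-- Adem–Reichstein: the ideal `I = (m_{(d+1)}, …, m_{(d+n)})` generated by
the power sums of degrees `d+1, …, d+n` contains every `m_λ` with `lp(λ) ≥ d+1` and
`lm(λ)` invertible in `F`. -/
theorem mSymS_mem_span_powerSums (F : Type*) [Field F] (n : ℕ) (hn : 0 < n) (d : ℕ)
    (lam : Multiset ℕ) (hlam : IsPartition n lam)
    (hlp : d + 1 ≤ leadingPart lam) (hlm : (leadingMult lam : F) ≠ 0) :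
    mSymS F n lam ∈
      Ideal.span ((fun j => mSymS F n {d + j}) '' Set.Icc 1 n) :=
  mSymS_mem_span_powerSums_general F n d lam hlam hlp hlm
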